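/- The restriction of the cocycle c(A,B) = ∫ res([log D, A]∘B) to the subalgebra of vector fields {u(z)D} equals the Gelfand–Fuchs cocycle: c(u(z)D, v(z)D) = (1/6)·Res_{z=0}(u''(z)·v'(z)). -/

import Mathlib

/-!
Write `uD` for the symbol `vf u`. Only the coefficients of `D⁻¹` and `D⁻²` in
`[log D, uD] = u' - ½ u'' D⁻¹ + ⅓ u''' D⁻² - …` reach the `D⁻¹`-coefficient of the product
with `vD`: they contribute `⅓ u''' v` and `½ u'' v'` (from `D⁻¹ ∘ v = v D⁻¹ - v' D⁻² + …`), while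
the `D⁰` term contributes `binom(0, 2) u' v'' = 0`. Residues of derivatives vanish, so
`Res (u''' v) = -Res (u'' v')` and the total is `(½ - ⅓) Res (u'' v')`.
-/

noncomputable section

/-- Generalized binomial coefficient `binom(m, l)` for integer `m`. -/
def qbinom (m : ℤ) (l : ℕ) : ℚ :=
  (∏ i ∈ Finset.range l, ((m : ℚ) - (i : ℚ))) / (Nat.factorial l : ℚ)

/-- Product of pseudodifferential symbols via `Dᵐ ∘ u = Σ binom(m,l) u^{(l)} D^{m-l}`. -/
def pdMul {R : Type*} [CommRing R] [Algebra ℚ R] (d : R → R) (A B : ℤ → R) : ℤ → R :=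
  fun m => ∑ᶠ p : ℤ × ℕ, qbinom p.1 p.2 • (A p.1 * d^[p.2] (B (m - p.1 + (p.2 : ℤ))))

/-- The coefficients of `[log D, A]`. -/
def adLog {R : Type*} [CommRing R] [Algebra ℚ R] (d : R → R) (A : ℤ → R) : ℤ → R :=
  fun m => ∑ᶠ l : ℕ, (if l = 0 then (0 : ℚ) else ((-1) ^ (l + 1) / l)) • d^[l] (A (m + l))

/-- Formal derivative `d/dz` on Laurent polynomials `ℂ[z,z⁻¹]`. -/
def lder (f : LaurentPolynomial ℂ) : LaurentPolynomial ℂ :=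
  Finsupp.sum (show ℤ →₀ ℂ from AddMonoidAlgebra.coeff f) fun n a =>
    show LaurentPolynomial ℂ from AddMonoidAlgebra.ofCoeff (Finsupp.single (n - 1) ((n : ℂ) * a))

/-- Residue at `z = 0`: the coefficient of `z⁻¹`. -/
def lres (f : LaurentPolynomial ℂ) : ℂ := (show ℤ →₀ ℂ from AddMonoidAlgebra.coeff f) (-1)

/-- The 2-cocycle `c(A,B) = ∫ res ([log D, A] ∘ B)`. -/
def coc (A B : ℤ → LaurentPolynomial ℂ) : ℂ := lres (pdMul lder (adLog lder A) B (-1))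

/-- The vector field `u(z) D` viewed as a symbol. -/
def vf (u : LaurentPolynomial ℂ) : ℤ → LaurentPolynomial ℂ :=
  fun k => if k = 1 then u else 0

section Symbols

variable {R : Type*} [CommRing R] [Algebra ℚ R] {d : R → R}

theorem adLog_piSingle (hd : d 0 = 0) {k m : ℤ} {l : ℕ} (hl : m + l = k) (u : R) :
    adLog d (Pi.single k u) m = (if l = 0 then (0 : ℚ) else (-1) ^ (l + 1) / l) • d^[l] u := by
  refine (finsum_eq_single _ l fun n hn => ?_).trans (by rw [hl, Pi.single_eq_same])
  have hne : m + n ≠ k := by omega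
  rw [Pi.single_eq_of_ne hne, Function.iterate_fixed hd, smul_zero]

theorem adLog_piSingle_of_le (hd : d 0 = 0) {k m : ℤ} (hkm : k ≤ m) (u : R) :
    adLog d (Pi.single k u) m = 0 := by
  refine (finsum_eq_single _ 0 fun n hn => ?_).trans (by simp)
  have hne : m + n ≠ k := by omega
  rw [Pi.single_eq_of_ne hne, Function.iterate_fixed hd, smul_zero]

theorem pdMul_piSingle (hd : d 0 = 0) (A : ℤ → R) (j m : ℤ) (v : R) :
    pdMul d A (Pi.single j v) m =
      ∑ᶠ l : ℕ, qbinom (m - j + l) l • (A (m - j + l) * d^[l] v) := by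
  have hinj : Function.Injective fun l : ℕ => (m - j + l, l) := fun a b h => (Prod.ext_iff.1 h).2
  unfold pdMul
  rw [← finsum_mem_univ, ← finsum_mem_inter_support_eq' _ (Set.range _) _ fun p hp => ?_,
    finsum_mem_range hinj]
  · refine finsum_congr fun l => ?_
    rw [show m - (m - j + l) + l = j by ring, Pi.single_eq_same]
  · simp only [Set.mem_univ, iff_true]
    by_contra hp'
    refine hp ?_
    have hne : m - p.1 + p.2 ≠ j := fun h => hp' ⟨p.2, Prod.ext (by simp; omega) rfl⟩
    simp only [Pi.single_eq_of_ne hne, Function.iterate_fixed hd, mul_zero, smul_zero]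

theorem pdMul_piSingle_eq_sum (hd : d 0 = 0) {A : ℤ → R} {j m : ℤ} {n : ℕ}
    (hA : ∀ l, n ≤ l → A (m - j + l) = 0) (v : R) :
    pdMul d A (Pi.single j v) m =
      ∑ l ∈ Finset.range n, qbinom (m - j + l) l • (A (m - j + l) * d^[l] v) := by
  rw [pdMul_piSingle hd]
  refine finsum_eq_sum_of_support_subset _ fun l hl => ?_
  by_contra hln
  exact hl (by simp [hA l (by simpa using hln)])

end Symbols

theorem qbinom_zero_right (m : ℤ) : qbinom m 0 = 1 := by simp [qbinom]

theorem qbinom_one_right (m : ℤ) : qbinom m 1 = m := by simp [qbinom]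

theorem qbinom_eq_zero_of_lt {m : ℤ} {l : ℕ} (h₀ : 0 ≤ m) (hl : m < l) : qbinom m l = 0 := by
  lift m to ℕ using h₀
  refine div_eq_zero_iff.2 (Or.inl (Finset.prod_eq_zero (i := m) (by simpa using hl) ?_))
  simp

section Laurent

open AddMonoidAlgebra

theorem lder_zero : lder 0 = 0 := by simp [lder]

theorem lder_single (n : ℤ) (a : ℂ) : lder (single n a) = single (n - 1) (n * a) := by
  rw [lder, coeff_single, Finsupp.sum_single_index]
  · rfl
  · exact (ofCoeff_eq_zero ..).2 (by simp)

theorem lder_add (f g : LaurentPolynomial ℂ) : lder (f + g) = lder f + lder g := by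
  unfold lder
  rw [coeff_add, Finsupp.sum_add_index] <;> intros <;>
    simp [mul_add, Finsupp.single_add, ofCoeff_add]

theorem lder_mul (f g : LaurentPolynomial ℂ) : lder (f * g) = lder f * g + f * lder g := by
  induction f using induction_linear with
  | zero => simp [lder_zero]
  | add f₁ f₂ h₁ h₂ => rw [add_mul, lder_add, h₁, h₂, lder_add]; ring
  | single n a =>
    induction g using induction_linear with
    | zero => simp [lder_zero]
    | add g₁ g₂ h₁ h₂ => rw [mul_add, lder_add, h₁, h₂, lder_add]; ring
    | single m b =>
      rw [single_mul_single, lder_single, lder_single, lder_single, single_mul_single,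
        single_mul_single, show n - 1 + m = n + m - 1 by ring,
        show n + (m - 1) = n + m - 1 by ring, ← single_add]
      congr 1
      push_cast
      ring

theorem lres_add (f g : LaurentPolynomial ℂ) : lres (f + g) = lres f + lres g := by
  rw [lres, lres, lres, coeff_add, Finsupp.add_apply]

theorem lres_smul (q : ℚ) (f : LaurentPolynomial ℂ) : lres (q • f) = q * lres f := by
  rw [lres, lres, coeff_smul, Finsupp.smul_apply, Rat.smul_def]

theorem lres_lder (f : LaurentPolynomial ℂ) : lres (lder f) = 0 := by
  unfold lres lder
  rw [coeff_finsuppSum, Finsupp.sum_apply]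
  refine Finset.sum_eq_zero fun n _ => ?_
  dsimp only
  rw [coeff_ofCoeff, Finsupp.single_apply]
  split_ifs with h
  · rw [show n = 0 by omega]; simp
  · rfl

theorem lres_lder_mul (f g : LaurentPolynomial ℂ) : lres (lder f * g) = -lres (f * lder g) := by
  have h := lres_lder (f * g)
  rw [lder_mul, lres_add] at h
  exact eq_neg_of_add_eq_zero_left h

end Laurent

theorem vf_eq_piSingle (u : LaurentPolynomial ℂ) : vf u = Pi.single 1 u :=
  funext fun k => by simp [vf, Pi.single_apply]

/-- the restriction of the cocycle `c` to vector fields is the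
Gelfand–Fuchs cocycle: `c(uD, vD) = (1/6)·Res_{z=0}(u''·v')`. -/
theorem coc_on_vector_fields (u v : LaurentPolynomial ℂ) :
    coc (vf u) (vf v) = (1/6 : ℂ) * lres (lder (lder u) * lder v) := by
  have hD₂ : adLog lder (Pi.single 1 u) (-1 - 1 + (0 : ℕ)) = (1 / 3 : ℚ) • lder^[3] u := by
    rw [adLog_piSingle lder_zero (l := 3) (by norm_num)]
    norm_num
  have hD₁ : adLog lder (Pi.single 1 u) (-1 - 1 + (1 : ℕ)) = (-1 / 2 : ℚ) • lder^[2] u := by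
    rw [adLog_piSingle lder_zero (l := 2) (by norm_num)]
    norm_num
  rw [coc, vf_eq_piSingle, vf_eq_piSingle,
    pdMul_piSingle_eq_sum lder_zero (n := 3) fun l hl => adLog_piSingle_of_le lder_zero (by omega) u,
    Finset.sum_range_succ, Finset.sum_range_succ, Finset.sum_range_one, hD₂, hD₁,
    qbinom_zero_right, qbinom_one_right,
    qbinom_eq_zero_of_lt (by norm_num) (by norm_num), zero_smul, add_zero]
  simp only [smul_mul_assoc, smul_smul, lres_add, lres_smul, Function.iterate_succ_apply',
    Function.iterate_zero_apply, lres_lder_mul]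
  push_cast
  ring
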